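/- arXiv:1211.3894 — 3 statements merged into one kernel-verified Lean document; each statement's English description precedes it below -/
import Mathlib

section
/- Let F, G : X → X₋₁ be Lipschitz with best Lipschitz constants |F|_Lip, |G|_Lip satisfying (|F|_Lip + |G|_Lip)/2 < 1. If x, y ∈ X satisfy Cx = F(x) and Cy = G(y), then ‖x − y‖_X ≤ (1 − (|F|_Lip + |G|_Lip)/2)⁻¹ · sup_{u∈X} ‖F(u) − G(u)‖_{X₋₁}. -/
/-!
Applying `C`, which is an isometry, turns `‖x - y‖` into `‖F x - G y‖`. Passing through `F y`
and through `G x` bounds this by `M + |F|_Lip ‖x - y‖` and by `M + |G|_Lip ‖x - y‖`; averaging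
the two gives `‖x - y‖ ≤ M + (|F|_Lip + |G|_Lip)/2 · ‖x - y‖`, which can be solved for `‖x - y‖`.
-/

section

variable {α β : Type*} [PseudoMetricSpace α] [PseudoMetricSpace β] {F G : α → β} {LF LG : NNReal}
  {M : ℝ}

lemma dist_apply_le_of_lipschitzWith_of_dist_le (hF : LipschitzWith LF F)
    (hG : LipschitzWith LG G) (hM : ∀ u, dist (F u) (G u) ≤ M) (x y : α) :
    dist (F x) (G y) ≤ M + ((LF : ℝ) + LG) / 2 * dist x y := by
  have via_Fy : dist (F x) (G y) ≤ LF * dist x y + M :=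
    (dist_triangle _ (F y) _).trans (add_le_add (hF.dist_le_mul x y) (hM y))
  have via_Gx : dist (F x) (G y) ≤ M + LG * dist x y :=
    (dist_triangle _ (G x) _).trans (add_le_add (hM x) (hG.dist_le_mul x y))
  linarith

lemma one_sub_mul_dist_le_of_isometry {C : α → β} (hC : Isometry C) (hF : LipschitzWith LF F)
    (hG : LipschitzWith LG G) (hM : ∀ u, dist (F u) (G u) ≤ M) {x y : α} (hx : C x = F x)
    (hy : C y = G y) :
    (1 - ((LF : ℝ) + LG) / 2) * dist x y ≤ M := by
  have h := dist_apply_le_of_lipschitzWith_of_dist_le hF hG hM x y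
  rw [← hx, ← hy, hC.dist_eq] at h
  linarith

end

theorem stmt3_general
    {X Xm1 : Type*} [NormedAddCommGroup X] [NormedSpace ℝ X]
    [NormedAddCommGroup Xm1] [NormedSpace ℝ Xm1]
    (C : X ≃ₗᵢ[ℝ] Xm1) (F G : X → Xm1) (LF LG : NNReal)
    (hFG : ((LF : ℝ) + LG) / 2 < 1)
    (hF : LipschitzWith LF F) (hG : LipschitzWith LG G)
    (x y : X) (hx : C x = F x) (hy : C y = G y)
    (M : ℝ) (hM : ∀ u : X, ‖F u - G u‖ ≤ M) :
    ‖x - y‖ ≤ (1 - ((LF : ℝ) + LG) / 2)⁻¹ * M := by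
  have key := one_sub_mul_dist_le_of_isometry C.isometry hF hG
    (fun u => (dist_eq_norm (F u) (G u)).trans_le (hM u)) hx hy
  rw [dist_eq_norm] at key
  rwa [le_inv_mul_iff₀ (sub_pos.mpr hFG)]

/-- Continuous dependence. `C : X ≃ₗᵢ X₋₁` the isometric extension;
`F, G : X → X₋₁` Lipschitz with best constants `LF, LG` with `(LF+LG)/2 < 1`.
If `Cx = F x` and `Cy = G y`, then for every uniform bound `M` on `‖F u − G u‖`
(so in particular for the supremum), `‖x − y‖ ≤ (1 − (LF+LG)/2)⁻¹ · M`. -/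
theorem stmt3
    {X Xm1 : Type*} [NormedAddCommGroup X] [NormedSpace ℝ X] [CompleteSpace X]
    [NormedAddCommGroup Xm1] [NormedSpace ℝ Xm1]
    (C : X ≃ₗᵢ[ℝ] Xm1) (F G : X → Xm1) (LF LG : NNReal)
    (hFG : ((LF : ℝ) + LG) / 2 < 1)
    (hF : LipschitzWith LF F) (hG : LipschitzWith LG G)
    (x y : X) (hx : C x = F x) (hy : C y = G y)
    (M : ℝ) (hM : ∀ u : X, ‖F u - G u‖ ≤ M) :
    ‖x - y‖ ≤ (1 - ((LF : ℝ) + LG) / 2)⁻¹ * M :=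
  stmt3_general C F G LF LG hFG hF hG x y hx hy M hM
end

section
/- For p ∈ (1,∞), ν > 0, and X a Banach space, the history-segment operator Θ : L_{p,ν}(ℝ;X) → L_{p,ν}(ℝ; L_p(ℝ_{<0};X)), f ↦ (t ↦ (θ ↦ f(t+θ))), is bounded with operator norm exactly (pν)^{−1/p}. -/
open MeasureTheory Real Set

/-!
After the substitution `s = t + θ` the left side is `∫ₜ (∫_{s<t} ‖f s‖ᵖ ds) e^{-νpt} dt`.
Tonelli exchanges the two integrals, giving `∫ₛ ‖f s‖ᵖ (∫_{t>s} e^{-νpt} dt) ds`, and the inner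
integral is exactly `e^{-νps} / (pν)`.
-/

theorem setLIntegral_Iio_zero_comp_const_add (G : ℝ → ENNReal) (t : ℝ) :
    ∫⁻ θ in Iio 0, G (t + θ) = ∫⁻ s in Iio t, G s := by
  rw [(measurePreserving_add_left volume t).setLIntegral_comp_emb
    (measurableEmbedding_addLeft t), image_const_add_Iio, add_zero]

theorem lintegral_setLIntegral_Iio_mul {μ : Measure ℝ} [SFinite μ] {G w : ℝ → ENNReal}
    (hG : AEMeasurable G μ) (hw : Measurable w) :
    ∫⁻ t, (∫⁻ s in Iio t, G s ∂μ) * w t ∂μ = ∫⁻ s, G s * ∫⁻ t in Ioi s, w t ∂μ ∂μ := by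
  set F : ℝ × ℝ → ENNReal := {q | q.2 < q.1}.indicator fun q => G q.2 * w q.1
  have hF : AEMeasurable F (μ.prod μ) :=
    (hG.comp_snd.mul (hw.comp measurable_fst).aemeasurable).indicator
      (measurableSet_lt measurable_snd measurable_fst)
  calc ∫⁻ t, (∫⁻ s in Iio t, G s ∂μ) * w t ∂μ = ∫⁻ t, ∫⁻ s, F (t, s) ∂μ ∂μ := by
        refine lintegral_congr fun t => ?_
        rw [← lintegral_indicator measurableSet_Iio,
          ← lintegral_mul_const'' _ (hG.indicator measurableSet_Iio)]
        refine lintegral_congr fun s => ?_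
        by_cases h : s < t <;> simp [F, h]
    _ = ∫⁻ s, ∫⁻ t, F (t, s) ∂μ ∂μ := lintegral_lintegral_swap hF
    _ = ∫⁻ s, G s * ∫⁻ t in Ioi s, w t ∂μ ∂μ := by
        refine lintegral_congr fun s => ?_
        rw [← lintegral_const_mul _ hw, ← lintegral_indicator measurableSet_Ioi]
        refine lintegral_congr fun t => ?_
        by_cases h : s < t <;> simp [F, h]

theorem lintegral_Ioi_ofReal_exp_mul {a : ℝ} (ha : a < 0) (s : ℝ) :
    ∫⁻ t in Ioi s, ENNReal.ofReal (exp (a * t)) = ENNReal.ofReal (exp (a * s) / -a) := by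
  rw [← ofReal_integral_eq_lintegral_ofReal (integrableOn_exp_mul_Ioi ha s)
    (Filter.Eventually.of_forall fun t => (exp_pos _).le), integral_exp_mul_Ioi ha, neg_div,
    div_neg]

theorem stmt10_general
    {X : Type*} [NormedAddCommGroup X]
    (p : ℝ) (hp : 1 < p) (ν : ℝ) (hν : 0 < ν)
    (f : ℝ → X) (hf : AEStronglyMeasurable f (volume : Measure ℝ)) :
    ∫⁻ t, (∫⁻ θ in Set.Iio (0 : ℝ), (‖f (t + θ)‖₊ : ENNReal) ^ p)
        * ENNReal.ofReal (Real.exp (-ν * p * t))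
      = ENNReal.ofReal (1 / (p * ν)) *
        ∫⁻ t, (‖f t‖₊ : ENNReal) ^ p * ENNReal.ofReal (Real.exp (-ν * p * t)) := by
  have hrate : -ν * p < 0 := by nlinarith
  have hrate_neg : -(-ν * p) = p * ν := by ring
  simp_rw [setLIntegral_Iio_zero_comp_const_add fun x => (‖f x‖₊ : ENNReal) ^ p]
  rw [lintegral_setLIntegral_Iio_mul
      (hf.nnnorm.aemeasurable.coe_nnreal_ennreal.pow_const p) (by fun_prop),
    ← lintegral_const_mul' _ _ ENNReal.ofReal_ne_top]
  refine lintegral_congr fun s => ?_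
  rw [lintegral_Ioi_ofReal_exp_mul hrate, hrate_neg, div_eq_mul_one_div,
    ENNReal.ofReal_mul (exp_pos _).le]
  ring

/-- For `p ∈ (1,∞)`, `ν > 0`, the history-segment operator
`Θ : f ↦ (t ↦ (θ ↦ f(t+θ)))` from `L_{p,ν}(ℝ;X)` to `L_{p,ν}(ℝ;L_p(ℝ_{<0};X))`
satisfies `‖Θf‖_{p,ν}^p = (pν)^{-1}·‖f‖_{p,ν}^p` for every `f`, i.e. its operator
norm is exactly `(pν)^{−1/p}`.  This is expressed via the defining double
integral identity
`∫_ℝ (∫_{θ<0} ‖f(t+θ)‖^p dθ)·e^{−νpt} dt = (pν)⁻¹·∫_ℝ ‖f(t)‖^p·e^{−νpt} dt`. -/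
theorem stmt10
    {X : Type*} [NormedAddCommGroup X] [NormedSpace ℝ X]
    (p : ℝ) (hp : 1 < p) (ν : ℝ) (hν : 0 < ν)
    (f : ℝ → X) (hf : AEStronglyMeasurable f (volume : Measure ℝ)) :
    ∫⁻ t, (∫⁻ θ in Set.Iio (0 : ℝ), (‖f (t + θ)‖₊ : ENNReal) ^ p)
        * ENNReal.ofReal (Real.exp (-ν * p * t))
      = ENNReal.ofReal (1 / (p * ν)) *
        ∫⁻ t, (‖f t‖₊ : ENNReal) ^ p * ENNReal.ofReal (Real.exp (-ν * p * t)) :=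
  stmt10_general p hp ν hν f hf
end

section
/- Let ν ≠ 0 and define ∂_ν : C¹_ν(ℝ;X) ⊆ C_ν(ℝ;X) → C_ν(ℝ;X), f ↦ f′, where C¹_ν(ℝ;X) = {f ∈ C_ν(ℝ;X) : f′ ∈ C_ν(ℝ;X)}. Then 0 ∈ ρ(∂_ν), for ν > 0 one has (∂_ν⁻¹f)(t) = ∫_{−∞}^t f(τ)dτ, and the operator norm of ∂_ν⁻¹ is exactly 1/|ν|. -/
/-!
For `ν > 0` the inverse of `∂_ν` is the primitive `u t = ∫_{-∞}^t f`. If `e^{-ντ} ‖f τ‖ ≤ K` on a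
set `s ⊆ (-∞, t]`, then `e^{-νt} ‖∫_s f‖ ≤ K ∫_{-∞}^t e^{-ν(t-τ)} dτ = K / ν`; with `s = (-∞, t]`
this is the bound `‖∂_ν⁻¹‖ ≤ 1/ν`, and applied to the tails of `f` it gives the decay of
`e^{-νt} u t` at `±∞`. The case `ν < 0` reduces to `-ν > 0` through `u ↦ (t ↦ -u (-t))`, which
maps `C_ν` to `C_{-ν}` and commutes with differentiation. Uniqueness: the difference of two
solutions is a constant `c`, and `e^{-νt} c → 0` at both ends forces `c = 0`.

The constant `1/|ν|` is sharp: `u t = e^{νt} sech (δt) y` has weighted norm `‖y‖` at `t = 0`,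
while its derivative `e^{νt} (ν - δ tanh (δt)) sech (δt) y` has weighted norm at most
`(|ν| + δ) ‖y‖`; let `δ → 0`.
-/

open Real Filter

/-- Membership in `C_ν(ℝ;X)`. -/
def MemCnu {X : Type*} [NormedAddCommGroup X] [NormedSpace ℝ X] (ν : ℝ) (f : ℝ → X) : Prop :=
  Continuous f ∧ (∃ M : ℝ, ∀ t : ℝ, Real.exp (-ν * t) * ‖f t‖ ≤ M) ∧
    Tendsto (fun t => Real.exp (-ν * t) • f t) atTop (nhds 0) ∧
    Tendsto (fun t => Real.exp (-ν * t) • f t) atBot (nhds 0)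

open MeasureTheory Set Topology

section

variable {X : Type*} [NormedAddCommGroup X] {ν : ℝ}

lemma exp_neg_mul_mul_norm_le_iff {t K : ℝ} {x : X} :
    exp (-ν * t) * ‖x‖ ≤ K ↔ ‖x‖ ≤ K * exp (ν * t) := by
  rw [neg_mul, exp_neg, inv_mul_le_iff₀ (exp_pos _), mul_comm]

lemma integrableOn_Iic_of_weighted_bound (hν : 0 < ν) {f : ℝ → X} (hc : Continuous f) {M : ℝ}
    (hM : ∀ s, exp (-ν * s) * ‖f s‖ ≤ M) (t : ℝ) : IntegrableOn f (Iic t) :=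
  ((integrableOn_exp_mul_Iic hν t).const_mul M).mono' hc.aestronglyMeasurable.restrict
    (Eventually.of_forall fun s => exp_neg_mul_mul_norm_le_iff.1 (hM s))

variable [NormedSpace ℝ X] {f u v : ℝ → X}

lemma tendsto_exp_neg_mul_smul_zero_iff {l : Filter ℝ} :
    Tendsto (fun t => exp (-ν * t) • f t) l (𝓝 0) ↔
      Tendsto (fun t => exp (-ν * t) * ‖f t‖) l (𝓝 0) := by
  simp only [tendsto_zero_iff_norm_tendsto_zero (E := X), norm_smul, norm_of_nonneg (exp_pos _).le]

namespace MemCnu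

lemma neg (hf : MemCnu ν f) : MemCnu ν (fun t => -f t) := by
  obtain ⟨hc, ⟨M, hM⟩, htop, hbot⟩ := hf
  exact ⟨hc.neg, ⟨M, by simpa using hM⟩, by simpa using htop.neg, by simpa using hbot.neg⟩

lemma sub (hu : MemCnu ν u) (hv : MemCnu ν v) : MemCnu ν (fun t => u t - v t) := by
  obtain ⟨huc, ⟨M, hM⟩, hutop, hubot⟩ := hu
  obtain ⟨hvc, ⟨N, hN⟩, hvtop, hvbot⟩ := hv
  refine ⟨huc.sub hvc, ⟨M + N, fun t => ?_⟩, by simpa [smul_sub] using hutop.sub hvtop,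
    by simpa [smul_sub] using hubot.sub hvbot⟩
  calc exp (-ν * t) * ‖u t - v t‖ ≤ exp (-ν * t) * ‖u t‖ + exp (-ν * t) * ‖v t‖ := by
        rw [← mul_add]; gcongr; exact norm_sub_le _ _
    _ ≤ M + N := add_le_add (hM t) (hN t)

lemma comp_neg (hf : MemCnu ν f) : MemCnu (-ν) (fun t => f (-t)) := by
  obtain ⟨hc, ⟨M, hM⟩, htop, hbot⟩ := hf
  refine ⟨hc.comp continuous_neg, ⟨M, fun t => by simpa using hM (-t)⟩, ?_, ?_⟩
  · simpa [Function.comp_def] using hbot.comp tendsto_neg_atTop_atBot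
  · simpa [Function.comp_def] using htop.comp tendsto_neg_atBot_atTop

lemma const_eq_zero (hν : ν ≠ 0) {c : X} (h : MemCnu ν (fun _ => c)) : c = 0 := by
  wlog hpos : 0 < ν generalizing ν
  · exact this (neg_ne_zero.2 hν) h.comp_neg (by linarith [hν.lt_of_le (not_lt.1 hpos)])
  have hbot := tendsto_exp_neg_mul_smul_zero_iff.1 h.2.2.2
  refine norm_le_zero_iff.1 (ge_of_tendsto hbot ?_)
  filter_upwards [eventually_le_atBot 0] with t ht
  exact le_mul_of_one_le_left (norm_nonneg c) (one_le_exp (by nlinarith))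

lemma eq_of_hasDerivAt (hν : ν ≠ 0) (hu : MemCnu ν u) (hv : MemCnu ν v)
    (hu' : ∀ t, HasDerivAt u (f t) t) (hv' : ∀ t, HasDerivAt v (f t) t) : u = v := by
  have hd : ∀ t, HasDerivAt (fun s => u s - v s) 0 t := fun t =>
    ((hu' t).sub (hv' t)).congr_deriv (sub_self _)
  have hconst : (fun t => u t - v t) = fun _ => u 0 - v 0 := funext fun t =>
    is_const_of_deriv_eq_zero (fun s => (hd s).differentiableAt) (fun s => (hd s).deriv) t 0
  have hzero := const_eq_zero hν (hconst ▸ hu.sub hv)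
  funext t
  exact sub_eq_zero.1 ((congrFun hconst t).trans hzero)

end MemCnu

section Primitive

lemma exp_neg_mul_mul_norm_setIntegral_le (hν : 0 < ν) {s : Set ℝ} {t K : ℝ}
    (hs : MeasurableSet s) (hst : s ⊆ Iic t) (hK : 0 ≤ K)
    (hf : ∀ τ ∈ s, exp (-ν * τ) * ‖f τ‖ ≤ K) :
    exp (-ν * t) * ‖∫ τ in s, f τ‖ ≤ K / ν := by
  have hexp : IntegrableOn (fun τ => K * exp (ν * τ)) (Iic t) :=
    (integrableOn_exp_mul_Iic hν t).const_mul K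
  rw [exp_neg_mul_mul_norm_le_iff]
  calc ‖∫ τ in s, f τ‖ ≤ ∫ τ in s, K * exp (ν * τ) :=
        norm_integral_le_of_norm_le (hexp.mono_set hst) ((ae_restrict_iff' hs).2
          (Eventually.of_forall fun τ hτ => exp_neg_mul_mul_norm_le_iff.1 (hf τ hτ)))
    _ ≤ ∫ τ in Iic t, K * exp (ν * τ) :=
        setIntegral_mono_set hexp (Eventually.of_forall fun τ => by positivity)
          (Eventually.of_forall hst)
    _ = K / ν * exp (ν * t) := by
        rw [integral_const_mul, integral_exp_mul_Iic hν]; ring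

lemma tendsto_atBot_exp_neg_mul_mul_norm_integral_Iic (hν : 0 < ν)
    (hf : Tendsto (fun t => exp (-ν * t) * ‖f t‖) atBot (𝓝 0)) :
    Tendsto (fun t => exp (-ν * t) * ‖∫ τ in Iic t, f τ‖) atBot (𝓝 0) := by
  refine tendsto_order.2 ⟨fun a ha => Eventually.of_forall fun t => ha.trans_le (by positivity),
    fun ε hε => ?_⟩
  obtain ⟨T, hT⟩ := eventually_atBot.1 ((tendsto_order.1 hf).2 (ν * ε / 2) (by positivity))
  filter_upwards [eventually_le_atBot T] with t ht
  calc exp (-ν * t) * ‖∫ τ in Iic t, f τ‖ ≤ ν * ε / 2 / ν :=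
        exp_neg_mul_mul_norm_setIntegral_le hν measurableSet_Iic subset_rfl (by positivity)
          fun τ hτ => (hT τ (le_trans hτ ht)).le
    _ < ε := by field_simp; linarith

lemma tendsto_atTop_exp_neg_mul_mul_norm_integral_Iic (hν : 0 < ν)
    (hint : ∀ t, IntegrableOn f (Iic t))
    (hf : Tendsto (fun t => exp (-ν * t) * ‖f t‖) atTop (𝓝 0)) :
    Tendsto (fun t => exp (-ν * t) * ‖∫ τ in Iic t, f τ‖) atTop (𝓝 0) := by
  refine tendsto_order.2 ⟨fun a ha => Eventually.of_forall fun t => ha.trans_le (by positivity),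
    fun ε hε => ?_⟩
  obtain ⟨T, hT⟩ := eventually_atTop.1 ((tendsto_order.1 hf).2 (ν * ε / 2) (by positivity))
  have hhead : Tendsto (fun t => exp (-ν * t) * ‖∫ τ in Iic T, f τ‖) atTop (𝓝 0) := by
    simpa using (tendsto_exp_atBot.comp
      (tendsto_id.const_mul_atTop_of_neg (neg_lt_zero.2 hν))).mul_const _
  filter_upwards [(tendsto_order.1 hhead).2 (ε / 2) (by positivity), eventually_ge_atTop T]
    with t hhead_lt hTt
  have hsplit : ∫ τ in Iic t, f τ = (∫ τ in Iic T, f τ) + ∫ τ in Ioc T t, f τ := by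
    rw [← intervalIntegral.integral_of_le hTt,
      ← intervalIntegral.integral_Iic_sub_Iic (hint T) (hint t)]
    abel
  have htail : exp (-ν * t) * ‖∫ τ in Ioc T t, f τ‖ ≤ ν * ε / 2 / ν :=
    exp_neg_mul_mul_norm_setIntegral_le hν measurableSet_Ioc Ioc_subset_Iic_self
      (by positivity) fun τ hτ => (hT τ hτ.1.le).le
  calc exp (-ν * t) * ‖∫ τ in Iic t, f τ‖
      ≤ exp (-ν * t) * ‖∫ τ in Iic T, f τ‖ + exp (-ν * t) * ‖∫ τ in Ioc T t, f τ‖ := by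
        rw [hsplit, ← mul_add]; gcongr; exact norm_add_le _ _
    _ < ε / 2 + ν * ε / 2 / ν := add_lt_add_of_lt_of_le hhead_lt htail
    _ = ε := by field_simp; ring

variable [CompleteSpace X]

lemma hasDerivAt_integral_Iic (hc : Continuous f) (hint : ∀ t, IntegrableOn f (Iic t))
    (t : ℝ) : HasDerivAt (fun s => ∫ τ in Iic s, f τ) (f t) t := by
  have hsplit : ∀ s, ∫ τ in Iic s, f τ = (∫ τ in Iic 0, f τ) + ∫ τ in (0 : ℝ)..s, f τ :=
    fun s => by rw [← intervalIntegral.integral_Iic_sub_Iic (hint 0) (hint s)]; abel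
  rw [funext hsplit]
  exact (intervalIntegral.integral_hasDerivAt_right (hc.intervalIntegrable 0 t)
    hc.aestronglyMeasurable.stronglyMeasurableAtFilter hc.continuousAt).const_add _

lemma MemCnu.integral_Iic (hν : 0 < ν) (hf : MemCnu ν f) :
    MemCnu ν (fun t => ∫ τ in Iic t, f τ) ∧
      ∀ t, HasDerivAt (fun s => ∫ τ in Iic s, f τ) (f t) t := by
  obtain ⟨hc, ⟨M, hM⟩, htop, hbot⟩ := hf
  have hint := integrableOn_Iic_of_weighted_bound hν hc hM
  have hderiv := hasDerivAt_integral_Iic hc hint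
  refine ⟨⟨continuous_iff_continuousAt.2 fun t => (hderiv t).continuousAt, ⟨M / ν, fun t => ?_⟩,
    ?_, ?_⟩, hderiv⟩
  · have hM0 : 0 ≤ M := le_trans (by positivity) (hM 0)
    exact exp_neg_mul_mul_norm_setIntegral_le hν measurableSet_Iic subset_rfl hM0
      fun τ _ => hM τ
  · exact tendsto_exp_neg_mul_smul_zero_iff.2 (tendsto_atTop_exp_neg_mul_mul_norm_integral_Iic
      hν hint (tendsto_exp_neg_mul_smul_zero_iff.1 htop))
  · exact tendsto_exp_neg_mul_smul_zero_iff.2 (tendsto_atBot_exp_neg_mul_mul_norm_integral_Iic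
      hν (tendsto_exp_neg_mul_smul_zero_iff.1 hbot))

lemma MemCnu.exists_hasDerivAt_weighted_le (hν : ν ≠ 0) (hf : MemCnu ν f)
    {M : ℝ} (hM : ∀ s, exp (-ν * s) * ‖f s‖ ≤ M) :
    ∃ u, MemCnu ν u ∧ (∀ t, HasDerivAt u (f t) t) ∧
      ∀ t, exp (-ν * t) * ‖u t‖ ≤ 1 / |ν| * M := by
  wlog hpos : 0 < ν generalizing ν f
  · have hneg : 0 < -ν := by linarith [hν.lt_of_le (not_lt.1 hpos)]
    obtain ⟨u, hu, hu', hbound⟩ :=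
      this (neg_ne_zero.2 hν) hf.comp_neg (fun s => by simpa using hM (-s)) hneg
    refine ⟨fun t => -u (-t), by simpa using hu.comp_neg.neg, fun t => ?_,
      fun t => by simpa using hbound (-t)⟩
    exact ((hu' (-t)).scomp t (hasDerivAt_neg t)).neg.congr_deriv (by simp)
  obtain ⟨hu, hu'⟩ := hf.integral_Iic hpos
  refine ⟨_, hu, hu', fun t => ?_⟩
  rw [abs_of_pos hpos, one_div_mul_eq_div]
  exact exp_neg_mul_mul_norm_setIntegral_le hpos measurableSet_Iic subset_rfl
    (le_trans (by positivity) (hM 0)) fun τ _ => hM τ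

end Primitive

section Optimality

lemma tendsto_cosh_atTop : Tendsto cosh atTop atTop :=
  tendsto_atTop_mono (fun x => by rw [cosh_eq]; linarith [exp_pos (-x)])
    (tendsto_exp_atTop.atTop_div_const two_pos)

lemma tendsto_inv_cosh_mul_atTop {δ : ℝ} (hδ : 0 < δ) :
    Tendsto (fun t => (cosh (δ * t))⁻¹) atTop (𝓝 0) :=
  (tendsto_cosh_atTop.comp (tendsto_id.const_mul_atTop hδ)).inv_tendsto_atTop

lemma tendsto_inv_cosh_mul_atBot {δ : ℝ} (hδ : 0 < δ) :
    Tendsto (fun t => (cosh (δ * t))⁻¹) atBot (𝓝 0) := by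
  simpa [Function.comp_def] using (tendsto_inv_cosh_mul_atTop hδ).comp tendsto_neg_atBot_atTop

lemma exp_neg_mul_mul_norm_exp_mul_smul (t a : ℝ) (y : X) :
    exp (-ν * t) * ‖(exp (ν * t) * a) • y‖ = |a| * ‖y‖ := by
  rw [norm_smul, norm_mul, norm_of_nonneg (exp_pos _).le, ← mul_assoc, ← mul_assoc,
    ← exp_add, neg_mul, neg_add_cancel, exp_zero, one_mul, norm_eq_abs]

lemma memCnu_exp_mul_smul {δ C : ℝ} (hδ : 0 < δ) {g : ℝ → ℝ} (hg : Continuous g)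
    (hC : ∀ t, |g t| ≤ C * (cosh (δ * t))⁻¹) (y : X) :
    MemCnu ν (fun t => (exp (ν * t) * g t) • y) := by
  have hweighted : ∀ t, exp (-ν * t) * ‖(exp (ν * t) * g t) • y‖ ≤ C * ‖y‖ * (cosh (δ * t))⁻¹ :=
    fun t => by
      rw [exp_neg_mul_mul_norm_exp_mul_smul, mul_right_comm]
      exact mul_le_mul_of_nonneg_right (hC t) (norm_nonneg y)
  have hC0 : 0 ≤ C := by simpa using (abs_nonneg _).trans (hC 0)
  refine ⟨((continuous_exp.comp (continuous_const_mul ν)).mul hg).smul continuous_const,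
    ⟨C * ‖y‖, fun t => (hweighted t).trans
      (mul_le_of_le_one_right (by positivity) (inv_le_one_of_one_le₀ (one_le_cosh _)))⟩, ?_, ?_⟩
  · refine tendsto_exp_neg_mul_smul_zero_iff.2 (squeeze_zero (fun t => by positivity) hweighted ?_)
    simpa using (tendsto_inv_cosh_mul_atTop hδ).const_mul (C * ‖y‖)
  · refine tendsto_exp_neg_mul_smul_zero_iff.2 (squeeze_zero (fun t => by positivity) hweighted ?_)
    simpa using (tendsto_inv_cosh_mul_atBot hδ).const_mul (C * ‖y‖)

lemma hasDerivAt_exp_mul_inv_cosh (ν δ t : ℝ) :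
    HasDerivAt (fun t => exp (ν * t) * (cosh (δ * t))⁻¹)
      (exp (ν * t) * ((ν - δ * (sinh (δ * t) / cosh (δ * t))) * (cosh (δ * t))⁻¹)) t := by
  have he : HasDerivAt (fun t => exp (ν * t)) (exp (ν * t) * ν) t := by
    simpa using ((hasDerivAt_id t).const_mul ν).exp
  have hc : HasDerivAt (fun t => cosh (δ * t)) (sinh (δ * t) * δ) t := by
    simpa using ((hasDerivAt_id t).const_mul δ).cosh
  refine (he.mul (hc.inv (cosh_pos _).ne')).congr_deriv ?_
  simp only [Pi.inv_apply]
  field_simp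
  ring

lemma abs_sub_mul_sinh_div_cosh_le (ν δ x : ℝ) (hδ : 0 ≤ δ) :
    |ν - δ * (sinh x / cosh x)| ≤ |ν| + δ := by
  have htanh : |sinh x / cosh x| ≤ 1 := by
    rw [← tanh_eq_sinh_div_cosh]; exact (abs_tanh_lt_one x).le
  calc |ν - δ * (sinh x / cosh x)| ≤ |ν| + δ * |sinh x / cosh x| := by
        rw [← abs_of_nonneg hδ, ← abs_mul, abs_of_nonneg hδ]; exact abs_sub _ _
    _ ≤ |ν| + δ := by gcongr; exact mul_le_of_le_one_right hδ htanh

lemma exists_memCnu_hasDerivAt_weighted_norm_gt [Nontrivial X] (hν : ν ≠ 0) {ε : ℝ}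
    (hε : 0 < ε) :
    ∃ f u : ℝ → X, MemCnu ν f ∧ MemCnu ν u ∧ (∀ t, HasDerivAt u (f t) t) ∧
      (∀ s, exp (-ν * s) * ‖f s‖ ≤ 1) ∧ ∃ t, 1 / |ν| - ε < exp (-ν * t) * ‖u t‖ := by
  set δ := ε * ν ^ 2
  set A := |ν| + δ
  have hν' : 0 < |ν| := abs_pos.2 hν
  have hδ : 0 < δ := by positivity
  obtain ⟨y, hy⟩ := exists_norm_eq X (inv_nonneg.2 (by positivity : 0 ≤ A))
  set g := fun t => (ν - δ * (sinh (δ * t) / cosh (δ * t))) * (cosh (δ * t))⁻¹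
  have hg : ∀ t, |g t| ≤ A * (cosh (δ * t))⁻¹ := fun t => by
    rw [abs_mul, abs_of_pos (inv_pos.2 (cosh_pos _))]
    exact mul_le_mul_of_nonneg_right (abs_sub_mul_sinh_div_cosh_le _ _ _ hδ.le) (by positivity)
  refine ⟨fun t => (exp (ν * t) * g t) • y, fun t => (exp (ν * t) * (cosh (δ * t))⁻¹) • y,
    memCnu_exp_mul_smul hδ ?_ hg y, memCnu_exp_mul_smul hδ ?_ (C := 1) ?_ y,
    fun t => (hasDerivAt_exp_mul_inv_cosh ν δ t).smul_const y, fun s => ?_, 0, ?_⟩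
  · have hcosh : Continuous fun t => cosh (δ * t) := continuous_cosh.comp (continuous_const_mul δ)
    exact (continuous_const.sub (continuous_const.mul (((continuous_sinh.comp
      (continuous_const_mul δ)).div hcosh) fun t => (cosh_pos _).ne'))).mul
      (hcosh.inv₀ fun t => (cosh_pos _).ne')
  · exact (continuous_cosh.comp (continuous_const_mul δ)).inv₀ fun t => (cosh_pos _).ne'
  · intro t
    rw [one_mul, abs_of_pos (inv_pos.2 (cosh_pos _))]
  · rw [exp_neg_mul_mul_norm_exp_mul_smul, hy]
    calc |g s| * A⁻¹ ≤ A * (cosh (δ * s))⁻¹ * A⁻¹ := by gcongr; exact hg s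
      _ ≤ 1 := by
        rw [mul_right_comm, mul_inv_cancel₀ (by positivity), one_mul]
        exact inv_le_one_of_one_le₀ (one_le_cosh _)
  · show 1 / |ν| - ε < exp (-ν * 0) * ‖(exp (ν * 0) * (cosh (δ * 0))⁻¹) • y‖
    rw [exp_neg_mul_mul_norm_exp_mul_smul, mul_zero, cosh_zero, inv_one, abs_one, one_mul, hy]
    have hA : 0 < A := by positivity
    have hgap : 1 / |ν| - A⁻¹ = ε * (|ν| / A) := by
      field_simp
      simp only [A, δ, ← sq_abs ν]
      ring
    have hratio : |ν| / A < 1 := (div_lt_one (by positivity)).2 (by linarith)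
    nlinarith

end Optimality

end

/-- For `ν ≠ 0`, the operator `∂_ν : C¹_ν(ℝ;X) ⊆ C_ν(ℝ;X) → C_ν(ℝ;X)`,
`f ↦ f′`, has `0` in its resolvent set: for every `f ∈ C_ν` there is a unique
`u ∈ C_ν` with `u′ = f`; for `ν > 0` it is given by `u(t) = ∫_{−∞}^t f(τ)dτ`;
and `‖∂_ν⁻¹‖ = 1/|ν|`: the weighted sup norm of `u` is at most `(1/|ν|)` times
any bound on that of `f`, and this constant is optimal. -/
theorem stmt13
    {X : Type*} [NormedAddCommGroup X] [NormedSpace ℝ X] [CompleteSpace X] [Nontrivial X]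
    (ν : ℝ) (hν : ν ≠ 0) :
    (∀ f : ℝ → X, MemCnu ν f →
      ∃! u : ℝ → X, MemCnu ν u ∧ ∀ t : ℝ, HasDerivAt u (f t) t)
    ∧ (0 < ν → ∀ f : ℝ → X, MemCnu ν f →
        MemCnu ν (fun t => ∫ τ in Set.Iic t, f τ) ∧
          ∀ t : ℝ, HasDerivAt (fun s => ∫ τ in Set.Iic s, f τ) (f t) t)
    ∧ (∀ f u : ℝ → X, MemCnu ν f → MemCnu ν u → (∀ t : ℝ, HasDerivAt u (f t) t) →
        ∀ M : ℝ, (∀ s : ℝ, Real.exp (-ν * s) * ‖f s‖ ≤ M) →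
          ∀ t : ℝ, Real.exp (-ν * t) * ‖u t‖ ≤ (1 / |ν|) * M)
    ∧ (∀ ε : ℝ, 0 < ε → ∃ f u : ℝ → X, MemCnu ν f ∧ MemCnu ν u ∧
        (∀ t : ℝ, HasDerivAt u (f t) t) ∧
        (∀ s : ℝ, Real.exp (-ν * s) * ‖f s‖ ≤ 1) ∧
        ∃ t : ℝ, 1 / |ν| - ε < Real.exp (-ν * t) * ‖u t‖) := by
  refine ⟨fun f hf => ?_, fun hpos f hf => hf.integral_Iic hpos, ?_,
    fun ε hε => exists_memCnu_hasDerivAt_weighted_norm_gt hν hε⟩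
  · obtain ⟨M, hM⟩ := hf.2.1
    obtain ⟨u, hu, hu', -⟩ := hf.exists_hasDerivAt_weighted_le hν hM
    exact ⟨u, ⟨hu, hu'⟩, fun v hv => hv.1.eq_of_hasDerivAt hν hu hv.2 hu'⟩
  · intro f u hf hu hu' M hM t
    obtain ⟨v, hv, hv', hbound⟩ := hf.exists_hasDerivAt_weighted_le hν hM
    rw [hu.eq_of_hasDerivAt hν hv hu' hv']
    exact hbound t
end
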